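/- arXiv:math/0410157 — 3 statements merged into one kernel-verified Lean document; each statement's English description precedes it below -/
import Mathlib

section
/- Define w : ℕ → ℝ by w_n = 2^k if n = 2^{2^k} for some k ∈ ℕ and w_n = 0 otherwise. Then ∑_{i=1}^{∞} w_i = ∞, and there is a constant c' > 0 such that for all n ≥ 4, ∑_{k=0}^{n} (n−k) w_k² ≥ c' n W_n², where W_n² = (1/n) ∑_{i=1}^{n} W_n(i)² and W_n(i) = ∑_{j=1}^{n} w_{|i−j|} (with w extended symmetrically, w_{-k} = w_k). -/
open Finset

private lemma sum_shift_left (f : ℕ → ℝ) (i : ℕ) (hi : 1 ≤ i) :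
    ∑ j ∈ Icc 1 i, f (i - j) = ∑ k ∈ range i, f k := by
  apply Finset.sum_nbij' (fun j => i - j) (fun k => i - k) <;> intros <;> simp_all <;> omega

private lemma sum_shift_right (f : ℕ → ℝ) (i n : ℕ) (hi : i ≤ n) :
    ∑ j ∈ Ioc i n, f (j - i) = ∑ k ∈ Icc 1 (n - i), f k := by
  apply Finset.sum_nbij' (fun j => j - i) (fun k => k + i) <;> intros <;> simp_all <;> omega

theorem sparse_weights_counterexample (w : ℕ → ℝ)
    (hw1 : ∀ k : ℕ, w (2 ^ 2 ^ k) = 2 ^ k)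
    (hw0 : ∀ n : ℕ, (¬ ∃ k : ℕ, n = 2 ^ 2 ^ k) → w n = 0) :
    ¬ Summable (fun i : ℕ => w i) ∧
    ∃ c' : ℝ, 0 < c' ∧ ∀ n : ℕ, 4 ≤ n →
      c' * (n : ℝ) *
          ((1 / (n : ℝ)) * ∑ i ∈ Finset.Icc 1 n,
              (∑ j ∈ Finset.Icc 1 n, w (Int.natAbs ((i : ℤ) - (j : ℤ)))) ^ 2)
        ≤ ∑ k ∈ Finset.range (n + 1), ((n : ℝ) - (k : ℝ)) * (w k) ^ 2 := by
  have hwnn : ∀ k, 0 ≤ w k := by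
    intro k
    by_cases h : ∃ j : ℕ, k = 2 ^ 2 ^ j
    · obtain ⟨j, rfl⟩ := h; rw [hw1]; positivity
    · rw [hw0 k h]
  constructor
  · intro hs
    have h0 := hs.tendsto_atTop_zero
    have hp : Filter.Tendsto (fun k : ℕ => (2:ℕ) ^ k) Filter.atTop Filter.atTop :=
      tendsto_pow_atTop_atTop_of_one_lt one_lt_two
    have h1 : Filter.Tendsto (fun k : ℕ => (2:ℕ) ^ 2 ^ k) Filter.atTop Filter.atTop := hp.comp hp
    have h2 : Filter.Tendsto (fun k : ℕ => w (2 ^ 2 ^ k)) Filter.atTop (nhds 0) := h0.comp h1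
    have h3 : Filter.Tendsto (fun k : ℕ => (2:ℝ) ^ k) Filter.atTop (nhds 0) := by
      simpa [hw1] using h2
    exact not_tendsto_nhds_of_tendsto_atTop
      (tendsto_pow_atTop_atTop_of_one_lt (by norm_num : (1:ℝ) < 2)) 0 h3
  · refine ⟨1/128, by norm_num, ?_⟩
    intro n hn
    have hn0 : 0 < (n:ℝ) := by
      have : 0 < n := by omega
      exact_mod_cast this
    set m := Nat.log 2 (Nat.log 2 n) with hmdef
    -- basic facts about m
    have hlogn : 2 ≤ Nat.log 2 n :=
      (Nat.le_log_iff_pow_le (by norm_num) (by omega)).mpr (by omega : 2 ^ 2 ≤ n)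
    have hm1 : 1 ≤ m :=
      (Nat.le_log_iff_pow_le (by norm_num) (by omega)).mpr (by omega : 2 ^ 1 ≤ Nat.log 2 n)
    have h2m : 2 ^ 2 ^ m ≤ n := by
      have h1 : 2 ^ m ≤ Nat.log 2 n := Nat.pow_log_le_self 2 (by omega)
      calc 2 ^ 2 ^ m ≤ 2 ^ Nat.log 2 n := Nat.pow_le_pow_right (by norm_num) h1
      _ ≤ n := Nat.pow_log_le_self 2 (by omega)
    have hmax : ∀ j : ℕ, 2 ^ 2 ^ j ≤ n → j ≤ m := by
      intro j hj
      have h1 : 2 ^ j ≤ Nat.log 2 n :=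
        (Nat.le_log_iff_pow_le (by norm_num) (by omega)).mpr hj
      exact (Nat.le_log_iff_pow_le (by norm_num) (by omega)).mpr h1
    -- the total weight S
    set S : ℝ := ∑ k ∈ range (n + 1), w k with hSdef
    have hS0 : 0 ≤ S := Finset.sum_nonneg fun k _ => hwnn k
    have hSb : S ≤ 2 ^ (m + 1) := by
      have himg : (range (m + 1)).image (fun j => 2 ^ 2 ^ j) ⊆ range (n + 1) := by
        intro k hk
        simp only [mem_image, mem_range] at hk ⊢
        obtain ⟨j, hj, rfl⟩ := hk
        have : 2 ^ 2 ^ j ≤ 2 ^ 2 ^ m :=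
          Nat.pow_le_pow_right (by norm_num) (Nat.pow_le_pow_right (by norm_num) (by omega))
        omega
      have hvanish : ∀ k ∈ range (n + 1), k ∉ (range (m + 1)).image (fun j => 2 ^ 2 ^ j) →
          w k = 0 := by
        intro k hkmem hk
        apply hw0
        rintro ⟨j, rfl⟩
        have hjle : 2 ^ 2 ^ j ≤ n := by have := Finset.mem_range.mp hkmem; omega
        exact hk (Finset.mem_image.mpr ⟨j, Finset.mem_range.mpr (by
          have := hmax j hjle; omega), rfl⟩)
      have hinj : ∀ x ∈ range (m + 1), ∀ y ∈ range (m + 1),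
          2 ^ 2 ^ x = 2 ^ 2 ^ y → x = y := by
        intro x _ y _ h
        exact Nat.pow_right_injective le_rfl (Nat.pow_right_injective le_rfl h)
      calc S = ∑ k ∈ (range (m + 1)).image (fun j => 2 ^ 2 ^ j), w k :=
            (Finset.sum_subset himg hvanish).symm
        _ = ∑ j ∈ range (m + 1), w (2 ^ 2 ^ j) := Finset.sum_image hinj
        _ = ∑ j ∈ range (m + 1), (2:ℝ) ^ j := by simp [hw1]
        _ ≤ 2 ^ (m + 1) := by
            rw [geom_sum_eq (by norm_num : (2:ℝ) ≠ 1)]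
            have : (0:ℝ) ≤ 2 ^ (m + 1) := by positivity
            rw [show (2:ℝ) - 1 = 1 by norm_num, div_one]
            linarith
    -- bound each W(i)
    have hWi : ∀ i ∈ Icc 1 n,
        (∑ j ∈ Icc 1 n, w (Int.natAbs ((i:ℤ) - (j:ℤ)))) ≤ 2 * S := by
      intro i hi
      obtain ⟨hi1, hi2⟩ := Finset.mem_Icc.mp hi
      have hsplit : Icc 1 n = Icc 1 i ∪ Ioc i n := by
        ext a; simp only [mem_Icc, mem_union, mem_Ioc]; omega
      have hdisj : Disjoint (Icc 1 i) (Ioc i n) := by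
        rw [Finset.disjoint_left]; intro a ha hb
        simp only [mem_Icc, mem_Ioc] at ha hb; omega
      rw [hsplit, Finset.sum_union hdisj]
      have h1 : ∑ j ∈ Icc 1 i, w (Int.natAbs ((i:ℤ) - (j:ℤ))) ≤ S := by
        have he : ∑ j ∈ Icc 1 i, w (Int.natAbs ((i:ℤ) - (j:ℤ)))
            = ∑ j ∈ Icc 1 i, w (i - j) := by
          apply Finset.sum_congr rfl; intro j hj
          have := Finset.mem_Icc.mp hj
          congr 1; omega
        rw [he, sum_shift_left w i hi1]
        apply Finset.sum_le_sum_of_subset_of_nonneg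
        · intro k hk; simp only [mem_range] at hk ⊢; omega
        · intro k _ _; exact hwnn k
      have h2 : ∑ j ∈ Ioc i n, w (Int.natAbs ((i:ℤ) - (j:ℤ))) ≤ S := by
        have he : ∑ j ∈ Ioc i n, w (Int.natAbs ((i:ℤ) - (j:ℤ)))
            = ∑ j ∈ Ioc i n, w (j - i) := by
          apply Finset.sum_congr rfl; intro j hj
          have := Finset.mem_Ioc.mp hj
          congr 1; omega
        rw [he, sum_shift_right w i n hi2]
        apply Finset.sum_le_sum_of_subset_of_nonneg
        · intro k hk; simp only [mem_Icc, mem_range] at hk ⊢; omega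
        · intro k _ _; exact hwnn k
      linarith
    have hWnn : ∀ i ∈ Icc 1 n, 0 ≤ ∑ j ∈ Icc 1 n, w (Int.natAbs ((i:ℤ) - (j:ℤ))) :=
      fun i _ => Finset.sum_nonneg fun j _ => hwnn _
    set Sig : ℝ := ∑ i ∈ Icc 1 n,
      (∑ j ∈ Icc 1 n, w (Int.natAbs ((i:ℤ) - (j:ℤ)))) ^ 2 with hSigdef
    have hSig : Sig ≤ (n:ℝ) * (4 * S ^ 2) := by
      calc Sig ≤ ∑ i ∈ Icc 1 n, (2 * S) ^ 2 :=
            Finset.sum_le_sum fun i hi => pow_le_pow_left₀ (hWnn i hi) (hWi i hi) 2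
        _ = (n:ℝ) * (4 * S ^ 2) := by
            rw [Finset.sum_const, Nat.card_Icc]
            simp only [Nat.add_sub_cancel, nsmul_eq_mul]
            ring
    -- the big single term
    obtain ⟨p, hpm⟩ : ∃ p, m = p + 1 := ⟨m - 1, by omega⟩
    have hk0sq : 2 ^ 2 ^ p * 2 ^ 2 ^ p = 2 ^ 2 ^ m := by
      rw [← pow_add]; congr 1; rw [hpm, pow_succ]; ring
    have hk0_2 : 2 ≤ 2 ^ 2 ^ p := by
      have : 2 ^ 1 ≤ 2 ^ 2 ^ p := Nat.pow_le_pow_right (by norm_num) (Nat.one_le_two_pow)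
      simpa using this
    have hk0n : 2 * 2 ^ 2 ^ p ≤ n := by
      calc 2 * 2 ^ 2 ^ p ≤ 2 ^ 2 ^ p * 2 ^ 2 ^ p := Nat.mul_le_mul_right _ hk0_2
        _ = 2 ^ 2 ^ m := hk0sq
        _ ≤ n := h2m
    have hk0mem : 2 ^ 2 ^ p ∈ range (n + 1) := Finset.mem_range.mpr (by omega)
    have hterm : ((n:ℝ) - (2 ^ 2 ^ p : ℕ)) * (w (2 ^ 2 ^ p)) ^ 2
        ≤ ∑ k ∈ Finset.range (n + 1), ((n : ℝ) - (k : ℝ)) * (w k) ^ 2 := by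
      apply Finset.single_le_sum (f := fun k : ℕ => ((n:ℝ) - (k:ℝ)) * (w k) ^ 2) _ hk0mem
      intro k hk
      have hkn : k ≤ n := by have := Finset.mem_range.mp hk; omega
      have : (k:ℝ) ≤ (n:ℝ) := by exact_mod_cast hkn
      exact mul_nonneg (by linarith) (sq_nonneg _)
    have hhalf : ((2:ℕ) ^ 2 ^ p : ℝ) ≤ (n:ℝ) / 2 := by
      have : ((2 * 2 ^ 2 ^ p : ℕ) : ℝ) ≤ (n:ℝ) := by exact_mod_cast hk0n
      push_cast at this
      linarith
    have hRHS : ((n:ℝ) / 2) * ((2:ℝ) ^ p) ^ 2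
        ≤ ((n:ℝ) - (2 ^ 2 ^ p : ℕ)) * (w (2 ^ 2 ^ p)) ^ 2 := by
      rw [hw1]
      apply mul_le_mul_of_nonneg_right _ (sq_nonneg _)
      push_cast at hhalf ⊢
      linarith
    -- assemble
    have hSig' : (1 / (n:ℝ)) * Sig ≤ 4 * S ^ 2 := by
      rw [div_mul_eq_mul_div, one_mul, div_le_iff₀ hn0] at *
      calc Sig ≤ (n:ℝ) * (4 * S ^ 2) := hSig
        _ = 4 * S ^ 2 * n := by ring
    have hLHS : (1 / 128 : ℝ) * (n:ℝ) * ((1 / (n:ℝ)) * Sig) ≤ ((n:ℝ) / 2) * ((2:ℝ) ^ p) ^ 2 := by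
      have h1 : (1 / 128 : ℝ) * (n:ℝ) * ((1 / (n:ℝ)) * Sig)
          ≤ (1 / 128 : ℝ) * (n:ℝ) * (4 * S ^ 2) :=
        mul_le_mul_of_nonneg_left hSig' (by positivity)
      have h2 : S ^ 2 ≤ ((2:ℝ) ^ (m + 1)) ^ 2 := pow_le_pow_left₀ hS0 hSb 2
      have h3 : (1 / 128 : ℝ) * (n:ℝ) * (4 * ((2:ℝ) ^ (m + 1)) ^ 2)
          = ((n:ℝ) / 2) * ((2:ℝ) ^ p) ^ 2 := by
        rw [hpm, show (2:ℝ) ^ (p + 1 + 1) = 2 ^ p * 4 by rw [pow_succ, pow_succ]; ring]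
        ring
      nlinarith [hn0.le]
    calc (1 / 128 : ℝ) * (n:ℝ) * ((1 / (n:ℝ)) * Sig) ≤ ((n:ℝ) / 2) * ((2:ℝ) ^ p) ^ 2 := hLHS
      _ ≤ ((n:ℝ) - (2 ^ 2 ^ p : ℕ)) * (w (2 ^ 2 ^ p)) ^ 2 := hRHS
      _ ≤ _ := hterm
end

section
/- Suppose E|F(..., ε_{-1}, ε_0, ε_1, ..., ε_n) − F(..., ε'_{-1}, ε'_0, ε_1, ..., ε_n)|^α ≤ C r^n for all n ∈ ℕ, where (ε'_i) is an independent i.i.d. copy of (ε_i) and 0 < r < 1. Then for each ℓ there is a measurable ℓ-variate function F_ℓ (obtained by fixing a realization of the past innovations) such that E|F(Z_ℓ) − F_ℓ(Z̃_{ℓ,ℓ})|^α ≤ C r^ℓ. -/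
/-!
Put `X = (ε_{ℓ-m})_m` and `Y = (ε'_{ℓ-m})_m`; they are independent, and the bound at `n = ℓ`
reads `E f(X, Y) ≤ C r^ℓ` for `f(x, y) = |F x - F (x on [0, ℓ), y beyond)|^α`. By Fubini some
realization `y₀` of `Y` has `E f(X, y₀) ≤ E f(X, Y)`, and `F_ℓ := F (·, y₀)` works.
Fubini needs `f(X, Y)` integrable: the spliced sequence is i.i.d. with law `ν`, like `X`, so this
follows from the integrability of `|F X|^α`. If that fails, `F_ℓ := 0` works: the Bochner
integral of the non-integrable `|F X|^α` is `0`, and `0 ≤ C r^ℓ` is read off the hypothesis.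
-/

open MeasureTheory ProbabilityTheory

lemma integrable_norm_sub_rpow {Ω E : Type*} {mΩ : MeasurableSpace Ω} {μ : Measure Ω}
    [NormedAddCommGroup E] {f g : Ω → E} {p : ℝ} (hp : 0 < p)
    (hfm : AEStronglyMeasurable f μ) (hgm : AEStronglyMeasurable g μ)
    (hf : Integrable (fun ω => ‖f ω‖ ^ p) μ) (hg : Integrable (fun ω => ‖g ω‖ ^ p) μ) :
    Integrable (fun ω => ‖f ω - g ω‖ ^ p) μ := by
  have memLp_iff := fun {h : Ω → E} (hh : AEStronglyMeasurable h μ) =>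
    integrable_norm_rpow_iff hh (by simpa using hp) ENNReal.ofReal_ne_top
  simp only [ENNReal.toReal_ofReal hp.le] at memLp_iff
  exact (memLp_iff (hfm.sub hgm)).2 (((memLp_iff hfm).1 hf).sub ((memLp_iff hgm).1 hg))

lemma measurable_precomp_iSup_comap {Ω ι κ β : Type*} {mβ : MeasurableSpace β}
    (f : ι → Ω → β) (g : κ → ι) :
    Measurable[⨆ i ∈ Set.range g, mβ.comap (f i)] fun ω k => f (g k) ω :=
  letI := ⨆ i ∈ Set.range g, mβ.comap (f i)
  measurable_pi_lambda _ fun k =>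
    (comap_measurable (f (g k))).mono (le_iSup₂_of_le (g k) ⟨k, rfl⟩ le_rfl) le_rfl

namespace ProbabilityTheory

variable {Ω ι κ β : Type*} {mΩ : MeasurableSpace Ω} {mβ : MeasurableSpace β} {μ : Measure Ω}

lemma iIndepFun.indepFun_precomp_of_disjoint {κ' : Type*} {f : ι → Ω → β}
    (hf : ∀ i, Measurable (f i)) (h : iIndepFun f μ) {g₁ : κ → ι} {g₂ : κ' → ι}
    (hg : Disjoint (Set.range g₁) (Set.range g₂)) :
    IndepFun (fun ω k => f (g₁ k) ω) (fun ω k => f (g₂ k) ω) μ := by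
  rw [IndepFun_iff_Indep]
  exact indep_of_indep_of_le_right (indep_of_indep_of_le_left
    (indep_iSup_of_disjoint (fun i => (hf i).comap_le) h.iIndep hg)
    (measurable_precomp_iSup_comap f g₁).comap_le) (measurable_precomp_iSup_comap f g₂).comap_le

lemma iIndepFun.identDistrib_precomp {f : ι → Ω → β}
    (hf : ∀ i, Measurable (f i)) (h : iIndepFun f μ) {ν : Measure β}
    (hν : ∀ i, μ.map (f i) = ν) {g₁ g₂ : κ → ι} (hg₁ : g₁.Injective) (hg₂ : g₂.Injective) :
    IdentDistrib (fun ω k => f (g₁ k) ω) (fun ω k => f (g₂ k) ω) μ μ where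
  aemeasurable_fst := (measurable_pi_lambda _ fun k => hf (g₁ k)).aemeasurable
  aemeasurable_snd := (measurable_pi_lambda _ fun k => hf (g₂ k)).aemeasurable
  map_eq := by
    rw [(h.precomp hg₁).map_fun_eq_infinitePi_map fun k => hf (g₁ k),
      (h.precomp hg₂).map_fun_eq_infinitePi_map fun k => hf (g₂ k)]
    simp only [hν]

lemma IndepFun.exists_integral_le_integral {γ : Type*} [MeasurableSpace γ]
    [IsProbabilityMeasure μ] {X : Ω → β} {Y : Ω → γ} (hX : Measurable X) (hY : Measurable Y)
    (hXY : IndepFun X Y μ) {f : β × γ → ℝ} (hf : Measurable f)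
    (hfi : Integrable (fun ω => f (X ω, Y ω)) μ) :
    ∃ y, ∫ ω, f (X ω, y) ∂μ ≤ ∫ ω, f (X ω, Y ω) ∂μ := by
  have hXYm : Measurable fun ω => (X ω, Y ω) := hX.prodMk hY
  have hlaw := (indepFun_iff_map_prod_eq_prod_map_map hX.aemeasurable hY.aemeasurable).1 hXY
  have hint : Integrable f ((μ.map X).prod (μ.map Y)) := by
    rw [← hlaw]; exact (integrable_map_measure hf.aestronglyMeasurable hXYm.aemeasurable).2 hfi
  have := Measure.isProbabilityMeasure_map (μ := μ) hY.aemeasurable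
  obtain ⟨y, hy⟩ := exists_le_integral hint.integral_prod_right
  refine ⟨y, ?_⟩
  rwa [← integral_prod_symm f hint, ← hlaw,
    integral_map hXYm.aemeasurable hf.aestronglyMeasurable,
    integral_map hX.aemeasurable (f := fun x => f (x, y))
      (hf.comp (measurable_id.prodMk measurable_const)).aestronglyMeasurable] at hy

end ProbabilityTheory

section Innovations

variable {Ω α : Type*} {mΩ : MeasurableSpace Ω} [MeasurableSpace α] {μ : Measure Ω}
  {ε ε' : ℤ → Ω → α}

lemma indepFun_shift_innovations (hε : ∀ i, Measurable (ε i)) (hε' : ∀ i, Measurable (ε' i))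
    (hindep : iIndepFun (fun p : Bool × ℤ => if p.1 then ε' p.2 else ε p.2) μ) (ℓ : ℤ) :
    IndepFun (fun ω (m : ℕ) => ε (ℓ - m) ω) (fun ω (m : ℕ) => ε' (ℓ - m) ω) μ :=
  hindep.indepFun_precomp_of_disjoint
    (fun p => by by_cases h : p.1 <;> simp [h, hε, hε'])
    (g₁ := fun m : ℕ => (false, ℓ - m)) (g₂ := fun m : ℕ => (true, ℓ - m))
    (Set.disjoint_left.2 <| by rintro _ ⟨_, rfl⟩ ⟨_, h⟩; simp at h)

lemma identDistrib_splice_innovations (hε : ∀ i, Measurable (ε i))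
    (hε' : ∀ i, Measurable (ε' i))
    (hindep : iIndepFun (fun p : Bool × ℤ => if p.1 then ε' p.2 else ε p.2) μ)
    {ν : Measure α} (hdist : ∀ i, μ.map (ε i) = ν) (hdist' : ∀ i, μ.map (ε' i) = ν) (ℓ : ℕ) :
    IdentDistrib (fun ω (m : ℕ) => if m < ℓ then ε (ℓ - m) ω else ε' (ℓ - m) ω)
      (fun ω (m : ℕ) => ε (ℓ - m) ω) μ μ := by
  have hsplice := hindep.identDistrib_precomp (ν := ν)
    (fun p => by by_cases h : p.1 <;> simp [h, hε, hε'])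
    (fun p => by by_cases h : p.1 <;> simp [h, hdist, hdist'])
    (g₁ := fun m : ℕ => (decide (ℓ ≤ m), (ℓ : ℤ) - m)) (g₂ := fun m : ℕ => (false, (ℓ : ℤ) - m))
    (fun a b h => by simpa using congrArg Prod.snd h)
    (fun a b h => by simpa using congrArg Prod.snd h)
  convert hsplice using 2 with ω
  · funext m
    by_cases h : m < ℓ <;> simp [h, le_of_not_gt, not_le_of_gt]
  · rfl

end Innovations

theorem finite_approx_of_gmc_general {Ω α : Type*} {mΩ : MeasurableSpace Ω}
    [MeasurableSpace α] (μ : Measure Ω) [IsProbabilityMeasure μ]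
    (ν : Measure α) (ε ε' : ℤ → Ω → α)
    (hεmeas : ∀ i, Measurable (ε i)) (hε'meas : ∀ i, Measurable (ε' i))
    (hindep : iIndepFun
      (fun p : Bool × ℤ => if p.1 then ε' p.2 else ε p.2) μ)
    (hdist : ∀ i, Measure.map (ε i) μ = ν)
    (hdist' : ∀ i, Measure.map (ε' i) μ = ν)
    (F : (ℕ → α) → ℝ) (hF : Measurable F)
    (αe C r : ℝ) (hα : 0 < αe)
    (hgmc : ∀ n : ℕ,
      ∫ ω, |F (fun m => ε ((n : ℤ) - m) ω)
          - F (fun m => if m < n then ε ((n : ℤ) - m) ω else ε' ((n : ℤ) - m) ω)|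
            ^ αe ∂μ
        ≤ C * r ^ n) :
    ∀ ℓ : ℕ, ∃ Fℓ : (Fin ℓ → α) → ℝ, Measurable Fℓ ∧
      ∫ ω, |F (fun m => ε ((ℓ : ℤ) - m) ω) - Fℓ (fun i => ε ((ℓ : ℤ) - i) ω)| ^ αe ∂μ
        ≤ C * r ^ ℓ := by
  intro ℓ
  let X : Ω → ℕ → α := fun ω m => ε (ℓ - m) ω
  let Y : Ω → ℕ → α := fun ω m => ε' (ℓ - m) ω
  let splice : (ℕ → α) × (ℕ → α) → ℕ → α := fun q m => if m < ℓ then q.1 m else q.2 m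
  have hXm : Measurable X := measurable_pi_lambda _ fun m => hεmeas _
  have hYm : Measurable Y := measurable_pi_lambda _ fun m => hε'meas _
  have hsplice : Measurable splice := measurable_pi_lambda _ fun m => by
    by_cases h : m < ℓ <;> simp only [splice, h, if_true, if_false] <;> fun_prop
  by_cases hX : Integrable (fun ω => |F (X ω)| ^ αe) μ
  swap
  · refine ⟨0, measurable_const, ?_⟩
    simp only [Pi.zero_apply, sub_zero]
    exact (integral_undef hX).trans_le ((integral_nonneg fun ω => by positivity).trans (hgmc ℓ))
  have hmixed : Integrable (fun ω => |F (splice (X ω, Y ω))| ^ αe) μ :=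
    ((identDistrib_splice_innovations hεmeas hε'meas hindep hdist hdist' ℓ).comp
      (by fun_prop : Measurable fun x => |F x| ^ αe)).integrable_iff.2 hX
  have hdiff := integrable_norm_sub_rpow hα (hF.comp hXm).aestronglyMeasurable
    (hF.comp (hsplice.comp (hXm.prodMk hYm))).aestronglyMeasurable hX hmixed
  have hXY := indepFun_shift_innovations hεmeas hε'meas hindep ℓ
  obtain ⟨y₀, hy₀⟩ := hXY.exists_integral_le_integral hXm hYm
    (f := fun q => |F q.1 - F (splice q)| ^ αe) (by fun_prop) hdiff
  refine ⟨fun v => F fun m => if h : m < ℓ then v ⟨m, h⟩ else y₀ m, ?_, hy₀.trans (hgmc ℓ)⟩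
  refine hF.comp (measurable_pi_lambda _ fun m => ?_)
  by_cases h : m < ℓ <;> simp only [h, dite_true, dite_false] <;> fun_prop

theorem finite_approx_of_gmc {Ω α : Type*} {mΩ : MeasurableSpace Ω}
    [MeasurableSpace α] (μ : Measure Ω) [IsProbabilityMeasure μ]
    (ν : Measure α) (ε ε' : ℤ → Ω → α)
    (hεmeas : ∀ i, Measurable (ε i)) (hε'meas : ∀ i, Measurable (ε' i))
    (hindep : iIndepFun
      (fun p : Bool × ℤ => if p.1 then ε' p.2 else ε p.2) μ)
    (hdist : ∀ i, Measure.map (ε i) μ = ν)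
    (hdist' : ∀ i, Measure.map (ε' i) μ = ν)
    (F : (ℕ → α) → ℝ) (hF : Measurable F)
    (αe C r : ℝ) (hα : 0 < αe) (hα1 : αe ≤ 1) (hC : 0 ≤ C)
    (hr0 : 0 < r) (hr1 : r < 1)
    (hgmc : ∀ n : ℕ,
      ∫ ω, |F (fun m => ε ((n : ℤ) - m) ω)
          - F (fun m => if m < n then ε ((n : ℤ) - m) ω else ε' ((n : ℤ) - m) ω)|
            ^ αe ∂μ
        ≤ C * r ^ n) :
    ∀ ℓ : ℕ, ∃ Fℓ : (Fin ℓ → α) → ℝ, Measurable Fℓ ∧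
      ∫ ω, |F (fun m => ε ((ℓ : ℤ) - m) ω) - Fℓ (fun i => ε ((ℓ : ℤ) - i) ω)| ^ αe ∂μ
        ≤ C * r ^ ℓ :=
  finite_approx_of_gmc_general (mΩ := mΩ) μ ν ε ε' hεmeas hε'meas hindep hdist hdist' F hF αe C r hα
    hgmc
end

section
/- Let X, X̃, Y, Ỹ be random variables, b > 0, 0 < u < 1, ℓ ∈ ℕ, and K(x,y) = 1_{|x−y| < b}. Then ‖[K(X,Y) − K(X̃,Ỹ)] · 1_{max(|X−X̃|, |Y−Ỹ|) < u^ℓ}‖₂ ≤ P(b − 2u^ℓ ≤ |X−Y| ≤ b)^{1/2} + P(b ≤ |X−Y| ≤ b + 2u^ℓ)^{1/2}. -/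
/-!
Moving both coordinates by less than `ε` moves `|X - Y|` by less than `2ε`, so the two
indicators `1_{|X - Y| < b}` and `1_{|X' - Y'| < b}` can only differ when `|X - Y|` lies within
`2ε` of the threshold `b`. The integrand is therefore dominated by the indicator of that band,
whose `L²`-norm is the square root of its measure; subadditivity of `t ↦ t ^ (1/2)` splits the
band into its two halves.
-/

open MeasureTheory Set
open scoped ENNReal

lemma abs_abs_sub_sub_abs_sub_lt {x x' y y' ε : ℝ} (hx : |x - x'| < ε) (hy : |y - y'| < ε) :
    |(|x - y|) - (|x' - y'|)| < 2 * ε :=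
  calc |(|x - y|) - (|x' - y'|)| ≤ |(x - y) - (x' - y')| := abs_abs_sub_abs_le_abs_sub _ _
    _ = |(x - x') - (y - y')| := by congr 1; ring
    _ ≤ |x - x'| + |y - y'| := abs_sub _ _
    _ < 2 * ε := by linarith

lemma mem_Icc_union_Icc_of_lt_iff_ne {s t b δ : ℝ} (hst : |s - t| < δ)
    (hne : ¬(s < b ↔ t < b)) : s ∈ Icc (b - δ) b ∪ Icc b (b + δ) := by
  rw [abs_lt] at hst
  by_cases hs : s < b
  · have ht : b ≤ t := not_lt.mp fun ht => hne (iff_of_true hs ht)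
    exact Or.inl ⟨by linarith, hs.le⟩
  · have ht : t < b := not_not.mp fun ht => hne (iff_of_false hs ht)
    exact Or.inr ⟨not_lt.mp hs, by linarith⟩

lemma abs_ite_lt_sub_ite_lt_le_indicator {s t b δ : ℝ} (hst : |s - t| < δ) :
    |(if s < b then (1 : ℝ) else 0) - if t < b then 1 else 0|
      ≤ (Icc (b - δ) b ∪ Icc b (b + δ)).indicator 1 s := by
  by_cases hiff : s < b ↔ t < b
  · simp only [hiff, sub_self, abs_zero]
    exact indicator_nonneg (fun _ _ => zero_le_one) s
  · rw [indicator_of_mem (mem_Icc_union_Icc_of_lt_iff_ne hst hiff)]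
    split_ifs <;> norm_num

lemma eLpNorm_le_measure_rpow_of_abs_le_indicator {Ω : Type*} {mΩ : MeasurableSpace Ω}
    {μ : Measure Ω} {f : Ω → ℝ} {s : Set Ω} (hf : ∀ ω, |f ω| ≤ s.indicator 1 ω)
    (p : ℝ≥0∞) : eLpNorm f p μ ≤ μ s ^ (1 / p.toReal) :=
  calc eLpNorm f p μ ≤ eLpNorm (s.indicator fun _ => (1 : ℝ)) p μ := eLpNorm_mono_real hf
    _ ≤ ‖(1 : ℝ)‖ₑ * μ s ^ (1 / p.toReal) := eLpNorm_indicator_const_le _ p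
    _ = μ s ^ (1 / p.toReal) := by rw [enorm_one, one_mul]

lemma measure_union_rpow_le {Ω : Type*} {mΩ : MeasurableSpace Ω} (μ : Measure Ω)
    (s t : Set Ω) {r : ℝ} (hr0 : 0 ≤ r) (hr1 : r ≤ 1) :
    μ (s ∪ t) ^ r ≤ μ s ^ r + μ t ^ r :=
  (ENNReal.rpow_le_rpow (measure_union_le s t) hr0).trans
    (ENNReal.rpow_add_le_add_rpow _ _ hr0 hr1)

theorem indicator_kernel_L2_bound_general {Ω : Type*} {mΩ : MeasurableSpace Ω}
    (μ : Measure Ω)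
    (X X' Y Y' : Ω → ℝ) (b u : ℝ)
    (ℓ : ℕ) (K : ℝ → ℝ → ℝ) (hK : ∀ x y, K x y = if |x - y| < b then 1 else 0) :
    eLpNorm
        (fun ω => if max |X ω - X' ω| |Y ω - Y' ω| < u ^ ℓ
          then K (X ω) (Y ω) - K (X' ω) (Y' ω) else 0) 2 μ
      ≤ (μ {ω | b - 2 * u ^ ℓ ≤ |X ω - Y ω| ∧ |X ω - Y ω| ≤ b}) ^ (1 / 2 : ℝ)
        + (μ {ω | b ≤ |X ω - Y ω| ∧ |X ω - Y ω| ≤ b + 2 * u ^ ℓ}) ^ (1 / 2 : ℝ) := by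
  set D : Ω → ℝ := fun ω => |X ω - Y ω|
  have hband : ∀ ω, |if max |X ω - X' ω| |Y ω - Y' ω| < u ^ ℓ
      then K (X ω) (Y ω) - K (X' ω) (Y' ω) else 0|
      ≤ (D ⁻¹' (Icc (b - 2 * u ^ ℓ) b ∪ Icc b (b + 2 * u ^ ℓ))).indicator 1 ω := by
    intro ω
    split_ifs with hclose
    · rw [max_lt_iff] at hclose
      simp only [hK]
      exact abs_ite_lt_sub_ite_lt_le_indicator (abs_abs_sub_sub_abs_sub_lt hclose.1 hclose.2)
    · rw [abs_zero]
      exact indicator_nonneg (fun _ _ => zero_le_one) ω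
  calc _ ≤ μ (D ⁻¹' (Icc (b - 2 * u ^ ℓ) b ∪ Icc b (b + 2 * u ^ ℓ))) ^ (1 / (2 : ℝ≥0∞).toReal) :=
        eLpNorm_le_measure_rpow_of_abs_le_indicator hband 2
    _ ≤ _ := by
      rw [preimage_union, ENNReal.toReal_ofNat]
      exact measure_union_rpow_le μ _ _ (by norm_num) (by norm_num)

theorem indicator_kernel_L2_bound {Ω : Type*} {mΩ : MeasurableSpace Ω}
    (μ : Measure Ω) [IsProbabilityMeasure μ]
    (X X' Y Y' : Ω → ℝ) (b u : ℝ) (hb : 0 < b) (hu0 : 0 < u) (hu1 : u < 1)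
    (ℓ : ℕ) (K : ℝ → ℝ → ℝ) (hK : ∀ x y, K x y = if |x - y| < b then 1 else 0) :
    eLpNorm
        (fun ω => if max |X ω - X' ω| |Y ω - Y' ω| < u ^ ℓ
          then K (X ω) (Y ω) - K (X' ω) (Y' ω) else 0) 2 μ
      ≤ (μ {ω | b - 2 * u ^ ℓ ≤ |X ω - Y ω| ∧ |X ω - Y ω| ≤ b}) ^ (1 / 2 : ℝ)
        + (μ {ω | b ≤ |X ω - Y ω| ∧ |X ω - Y ω| ≤ b + 2 * u ^ ℓ}) ^ (1 / 2 : ℝ) :=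
  indicator_kernel_L2_bound_general (mΩ := mΩ) μ X X' Y Y' b u ℓ K hK
end
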